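/- Let Ω ⊆ ℝ^n be open, p_0 ∈ Ω, k ≥ 1. Suppose g, h_1, …, h_{k+1}, F : Ω → ℝ with F differentiable at p_0, and suppose there is a homeomorphism β : [0,∞) → [0,∞) and C > 0 such that |g(p) − g(p_0) − Σ_{j=1}^{k+1} (h_j(p_0)/j!)(F(p) − F(p_0))^j| ≤ C β(|p−p_0|)^{k+1} |p−p_0|^{(k+1)/2} for all p ∈ Ω. Then g is differentiable at p_0 with dg_{p_0} = h_1(p_0) · dF_{p_0}. -/

import Mathlib

open scoped NNReal
open Asymptotics Filter Topology

lemma homeo_nnreal_map_zero (β : ℝ≥0 ≃ₜ ℝ≥0) : β 0 = 0 := by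
  by_contra hne
  have hpos : (0:ℝ≥0) < β 0 := pos_iff_ne_zero.mpr hne
  have hS : IsPreconnected (β '' Set.Ioi 0) :=
    (isPreconnected_Ioi).image _ β.continuous.continuousOn
  have himg : β '' Set.Ioi (0:ℝ≥0) = {β 0}ᶜ := by
    have h1 : Set.Ioi (0:ℝ≥0) = {(0:ℝ≥0)}ᶜ := by
      ext x; simp [pos_iff_ne_zero]
    rw [h1]
    have := Equiv.image_compl β.toEquiv {0}
    simpa [Set.image_singleton] using this
  rw [himg] at hS
  have hoc := hS.ordConnected
  have h0 : (0:ℝ≥0) ∈ ({β 0}ᶜ : Set ℝ≥0) := by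
    exact fun e => hne e.symm
  have h1 : (β 0 + 1 : ℝ≥0) ∈ ({β 0}ᶜ : Set ℝ≥0) := by simp
  have := hoc.out h0 h1 ⟨hpos.le, le_self_add⟩
  simp at this


/-- The inductive step for weak contactness of `C^{0,½+}` maps into `J^k(ℝ)`:
if `F` is differentiable at `p₀ ∈ Ω` and
`|g(p) − g(p₀) − ∑_{j=1}^{k+1} (h_j(p₀)/j!)(F(p) − F(p₀))^j|
  ≤ C β(|p−p₀|)^{k+1} |p−p₀|^{(k+1)/2}`
on `Ω` for a homeomorphism `β` of `[0,∞)` and `C > 0`, then `g` is differentiable at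
`p₀` with `dg_{p₀} = h_1(p₀) · dF_{p₀}`. -/
theorem stmt14 {n : ℕ} {Ω : Set (EuclideanSpace ℝ (Fin n))} (hΩ : IsOpen Ω)
    {p₀ : EuclideanSpace ℝ (Fin n)} (hp₀ : p₀ ∈ Ω) (k : ℕ) (hk : 1 ≤ k)
    (g F : EuclideanSpace ℝ (Fin n) → ℝ) (h : ℕ → EuclideanSpace ℝ (Fin n) → ℝ)
    (β : ℝ≥0 ≃ₜ ℝ≥0) (C : ℝ) (hC : 0 < C)
    (hbound : ∀ p ∈ Ω,
      |g p - g p₀ - ∑ j ∈ Finset.Icc 1 (k+1),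
          h j p₀ / (Nat.factorial j : ℝ) * (F p - F p₀) ^ j| ≤
        C * (β ⟨‖p - p₀‖, norm_nonneg _⟩ : ℝ) ^ (k+1) * ‖p - p₀‖ ^ (((k : ℝ) + 1) / 2))
    {DF : EuclideanSpace ℝ (Fin n) →L[ℝ] ℝ} (hF : HasFDerivAt F DF p₀) :
    HasFDerivAt g (h 1 p₀ • DF) p₀ := by
  rw [hasFDerivAt_iff_isLittleO]
  set φ : EuclideanSpace ℝ (Fin n) → ℝ := fun p => F p - F p₀ with hφ
  set E : EuclideanSpace ℝ (Fin n) → ℝ := fun p =>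
    g p - g p₀ - ∑ j ∈ Finset.Icc 1 (k+1),
      h j p₀ / (Nat.factorial j : ℝ) * φ p ^ j with hE
  -- little-o facts
  have hφ0 : Tendsto φ (𝓝 p₀) (𝓝 0) := by
    have := hF.continuousAt.tendsto
    have := this.sub (tendsto_const_nhds (x := F p₀))
    simpa using this
  have hφO : φ =O[𝓝 p₀] fun p => ‖p - p₀‖ := (hF.isBigO_sub).norm_right
  -- piece 3
  have fact3 : (fun p => h 1 p₀ * (φ p - DF (p - p₀))) =o[𝓝 p₀] fun p => p - p₀ := by
    have := (hasFDerivAt_iff_isLittleO.mp hF).const_mul_left (h 1 p₀)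
    simpa [hφ] using this
  -- piece 2
  have fact2 : (fun p => ∑ j ∈ Finset.Icc 2 (k+1),
      h j p₀ / (Nat.factorial j : ℝ) * φ p ^ j) =o[𝓝 p₀] fun p => p - p₀ := by
    apply Asymptotics.IsLittleO.fun_sum
    intro j hj
    obtain ⟨hj2, _⟩ := Finset.mem_Icc.mp hj
    have hpow : (fun p => φ p ^ (j - 1)) =o[𝓝 p₀] (fun _ => (1:ℝ)) := by
      rw [isLittleO_one_iff]
      have : Tendsto (fun p => φ p ^ (j-1)) (𝓝 p₀) (𝓝 ((0:ℝ) ^ (j-1))) :=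
        hφ0.pow _
      simpa [zero_pow (by omega : j - 1 ≠ 0)] using this
    have hmul := hpow.mul_isBigO hφO
    have : (fun p => φ p ^ j) =o[𝓝 p₀] fun p => ‖p - p₀‖ := by
      refine (hmul.congr ?_ ?_)
      · intro p
        rw [← pow_succ]
        congr 1
        omega
      · intro p; simp
    have := (this.const_mul_left (h j p₀ / (Nat.factorial j : ℝ)))
    exact this.of_norm_right
  -- piece 1
  have hβ0 : Tendsto (fun p => (β ⟨‖p - p₀‖, norm_nonneg _⟩ : ℝ)) (𝓝 p₀) (𝓝 0) := by
    have ht0 : Tendsto (fun p : EuclideanSpace ℝ (Fin n) => ‖p - p₀‖) (𝓝 p₀) (𝓝 0) :=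
      tendsto_norm_sub_self p₀
    have h1 : Tendsto (fun p : EuclideanSpace ℝ (Fin n) =>
        (⟨‖p - p₀‖, norm_nonneg _⟩ : ℝ≥0)) (𝓝 p₀) (𝓝 0) := by
      refine NNReal.tendsto_coe.mp ?_
      exact ht0
    have h2 := (β.continuous.tendsto 0).comp h1
    rw [homeo_nnreal_map_zero β] at h2
    rw [← NNReal.tendsto_coe] at h2
    exact h2
  have hu0 : Tendsto (fun p => C * (β ⟨‖p - p₀‖, norm_nonneg _⟩ : ℝ) ^ (k+1) *
      ‖p - p₀‖ ^ (((k:ℝ) - 1) / 2)) (𝓝 p₀) (𝓝 0) := by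
    have h1 : Tendsto (fun p => C * (β ⟨‖p - p₀‖, norm_nonneg _⟩ : ℝ) ^ (k+1))
        (𝓝 p₀) (𝓝 0) := by
      have := (hβ0.pow (k+1)).const_mul C
      simpa using this
    have h2 : Tendsto (fun p : EuclideanSpace ℝ (Fin n) =>
        ‖p - p₀‖ ^ (((k:ℝ) - 1) / 2)) (𝓝 p₀) (𝓝 ((0:ℝ) ^ (((k:ℝ) - 1) / 2))) := by
      have hc : ContinuousAt (fun t : ℝ => t ^ (((k:ℝ) - 1) / 2)) 0 :=
        Real.continuousAt_rpow_const 0 _ (Or.inr (div_nonneg (sub_nonneg.mpr (by exact_mod_cast hk)) (by norm_num)))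
      exact hc.tendsto.comp (tendsto_norm_sub_self p₀)
    have := h1.mul h2
    simpa using this
  have fact1 : E =o[𝓝 p₀] fun p => p - p₀ := by
    rw [isLittleO_iff]
    intro ε hε
    have hΩn : Ω ∈ 𝓝 p₀ := hΩ.mem_nhds hp₀
    have hev := hu0.eventually (eventually_le_nhds hε : ∀ᶠ x in 𝓝 (0:ℝ), x ≤ ε)
    filter_upwards [hΩn, hev] with p hpΩ hup
    have hb := hbound p hpΩ
    by_cases hpp : p = p₀
    · have hEz : E p = 0 := by
        simp only [hE, hφ, hpp]
        rw [Finset.sum_eq_zero]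
        · ring
        · intro j hj
          have h1j : 1 ≤ j := (Finset.mem_Icc.mp hj).1
          simp [zero_pow (by omega : j ≠ 0)]
      rw [hEz, hpp]
      simp [mul_nonneg hε.le]
    · have hnorm : (0:ℝ) < ‖p - p₀‖ := by
        simpa [sub_eq_zero] using norm_pos_iff.mpr (sub_ne_zero.mpr hpp)
      have hsplit : ‖p - p₀‖ ^ (((k:ℝ) + 1) / 2) =
          ‖p - p₀‖ ^ (((k:ℝ) - 1) / 2) * ‖p - p₀‖ := by
        rw [show ((k:ℝ)+1)/2 = ((k:ℝ)-1)/2 + 1 by ring, Real.rpow_add hnorm, Real.rpow_one]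
      have : ‖E p‖ ≤ (C * (β ⟨‖p - p₀‖, norm_nonneg _⟩ : ℝ) ^ (k+1) *
          ‖p - p₀‖ ^ (((k:ℝ) - 1) / 2)) * ‖p - p₀‖ := by
        rw [Real.norm_eq_abs]
        calc |E p| ≤ C * (β ⟨‖p - p₀‖, norm_nonneg _⟩ : ℝ) ^ (k+1) *
            ‖p - p₀‖ ^ (((k:ℝ) + 1) / 2) := by simpa [hE, hφ] using hb
          _ = _ := by rw [hsplit]; ring
      exact this.trans (by
        apply mul_le_mul_of_nonneg_right hup (norm_nonneg _))
  -- combine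
  have total := (fact1.add fact2).add fact3
  refine total.congr' ?_ (by rfl)
  filter_upwards with p
  have hsum : ∑ j ∈ Finset.Icc 1 (k+1), h j p₀ / (Nat.factorial j : ℝ) * φ p ^ j =
      h 1 p₀ * φ p + ∑ j ∈ Finset.Icc 2 (k+1), h j p₀ / (Nat.factorial j : ℝ) * φ p ^ j := by
    have hins : Finset.Icc 1 (k+1) = insert 1 (Finset.Icc 2 (k+1)) := by
      ext x
      simp [Finset.mem_Icc, Finset.mem_insert]
      omega
    rw [hins, Finset.sum_insert (by simp)]
    simp [Nat.factorial]
  simp only [hE, ContinuousLinearMap.smul_apply, smul_eq_mul]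
  rw [hsum]
  ring
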